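/- Clausen's identity: as formal power series (equivalently, for |t|<1), 3F2(μ, 1/2, 1−μ; 1, 1; t) = [2F1(μ/2, (1−μ)/2; 1; t)]^2. -/
import Mathlib

set_option maxHeartbeats 1600000


/-- The Pochhammer rising factorial `(a)_n = a(a+1)⋯(a+n−1)`. -/
noncomputable def poch (a : ℝ) (n : ℕ) : ℝ := Polynomial.eval a (ascPochhammer ℝ n)

/-- The Gauss hypergeometric series `2F1(a,b;c;t)` as a formal power series. -/
noncomputable def F21 (a b c : ℝ) : PowerSeries ℝ :=
  PowerSeries.mk fun n => poch a n * poch b n / (poch c n * (Nat.factorial n : ℝ))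

/-- The generalized hypergeometric series `3F2(a,b,c;d,e;t)` as a formal power series. -/
noncomputable def F32 (a b c d e : ℝ) : PowerSeries ℝ :=
  PowerSeries.mk fun n =>
    poch a n * poch b n * poch c n / (poch d n * poch e n * (Nat.factorial n : ℝ))

private lemma poch_zero (a : ℝ) : poch a 0 = 1 := by simp [poch]

private lemma poch_succ (a : ℝ) (n : ℕ) : poch a (n + 1) = poch a n * (a + n) :=
  ascPochhammer_succ_eval n a

private lemma poch_one_eq (n : ℕ) : poch 1 n = (n.factorial : ℝ) :=
  ascPochhammer_eval_one ℝ n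

section Key

variable (a b : ℝ)

/-- The `2F1` coefficient. -/
private noncomputable def cc (k : ℕ) : ℝ :=
  poch a k * poch b k / ((k.factorial : ℝ)) ^ 2

private lemma cc_zero : cc a b 0 = 1 := by simp [cc, poch_zero]

private lemma cc_succ (k : ℕ) :
    cc a b (k + 1) = cc a b k * ((a + k) * (b + k)) / ((k : ℝ) + 1) ^ 2 := by
  have hk : ((k.factorial : ℝ)) ≠ 0 := Nat.cast_ne_zero.mpr k.factorial_ne_zero
  have hk1 : ((k : ℝ) + 1) ≠ 0 := by positivity
  simp only [cc, poch_succ, Nat.factorial_succ]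
  push_cast
  field_simp

/-- The key convolution identity (coefficientwise Clausen identity). -/
private lemma key (hab : a + b = 1 / 2) (n : ℕ) :
    ∑ k ∈ Finset.range (n + 1), cc a b k * cc a b (n - k) =
      poch (2 * a) n * poch (1 / 2) n * poch (2 * b) n / ((n.factorial : ℝ)) ^ 3 := by
  induction n with
  | zero => simp [cc_zero, poch_zero]
  | succ n ih =>
    set P : ℝ := ((n : ℝ) + 2 * a) * ((n : ℝ) + 1 / 2) * ((n : ℝ) + 2 * b) with hP
    -- telescoping certificate
    set g : ℕ → ℝ := fun k =>
      (k : ℝ) ^ 2 * (2 * (k : ℝ) - 3 * ((n : ℝ) + 1)) * cc a b k * cc a b (n + 1 - k) with hg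
    have hterm : ∀ k ∈ Finset.range (n + 1),
        ((n : ℝ) + 1) ^ 3 * (cc a b k * cc a b (n + 1 - k))
          - P * (cc a b k * cc a b (n - k)) = g (k + 1) - g k := by
      intro k hk
      have hkn : k ≤ n := Nat.lt_succ_iff.mp (Finset.mem_range.mp hk)
      obtain ⟨j, hj⟩ : ∃ j, n = k + j := ⟨n - k, (Nat.add_sub_cancel' hkn).symm⟩
      subst hj
      have e1 : k + j + 1 - k = j + 1 := by omega
      have e2 : k + j - k = j := by omega
      have e3 : k + j + 1 - (k + 1) = j := by omega
      rw [hg, hP]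
      simp only [e1, e2, e3]
      rw [cc_succ a b k, cc_succ a b j]
      have hk1 : ((k : ℝ) + 1) ≠ 0 := by positivity
      have hj1 : ((j : ℝ) + 1) ≠ 0 := by positivity
      have hb : b = 1 / 2 - a := by linarith
      subst hb
      push_cast
      field_simp
      ring
    have htel : ∑ k ∈ Finset.range (n + 1),
        (((n : ℝ) + 1) ^ 3 * (cc a b k * cc a b (n + 1 - k))
          - P * (cc a b k * cc a b (n - k))) = g (n + 1) - g 0 := by
      rw [Finset.sum_congr rfl hterm]
      exact Finset.sum_range_sub g (n + 1)
    have hg0 : g 0 = 0 := by simp [hg]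
    have hgn : g (n + 1) = -(((n : ℝ) + 1) ^ 3 * cc a b (n + 1)) := by
      rw [hg]
      simp only [Nat.sub_self, cc_zero]
      push_cast
      ring
    -- main recurrence
    have hrec : ((n : ℝ) + 1) ^ 3 * ∑ k ∈ Finset.range (n + 1 + 1), cc a b k * cc a b (n + 1 - k)
        = P * ∑ k ∈ Finset.range (n + 1), cc a b k * cc a b (n - k) := by
      rw [Finset.sum_range_succ, Nat.sub_self, cc_zero]
      rw [Finset.sum_sub_distrib, ← Finset.mul_sum, ← Finset.mul_sum, hg0, hgn] at htel
      linear_combination htel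
    have hfac : ((n : ℝ) + 1) ≠ 0 := by positivity
    have hS : ∑ k ∈ Finset.range (n + 1 + 1), cc a b k * cc a b (n + 1 - k)
        = P * (∑ k ∈ Finset.range (n + 1), cc a b k * cc a b (n - k)) / ((n : ℝ) + 1) ^ 3 := by
      field_simp
      linear_combination hrec
    rw [hS, ih]
    have hfn : ((n.factorial : ℝ)) ≠ 0 := Nat.cast_ne_zero.mpr n.factorial_ne_zero
    rw [poch_succ, poch_succ, poch_succ, Nat.factorial_succ]
    push_cast
    field_simp
    ring

end Key

/-- Clausen's identity: as formal power series,
`3F2(μ, 1/2, 1−μ; 1, 1; t) = [2F1(μ/2, (1−μ)/2; 1; t)]²`. -/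
theorem clausen_identity (μ : ℝ) :
    F32 μ (1/2) (1 - μ) 1 1 = (F21 (μ/2) ((1 - μ)/2) 1) ^ 2 := by
  ext n
  rw [pow_two, PowerSeries.coeff_mul, Finset.Nat.sum_antidiagonal_eq_sum_range_succ_mk]
  simp only [F32, F21, PowerSeries.coeff_mk]
  have hkey := key (μ / 2) ((1 - μ) / 2) (by ring) n
  have h2a : 2 * (μ / 2) = μ := by ring
  have h2b : 2 * ((1 - μ) / 2) = 1 - μ := by ring
  rw [h2a, h2b] at hkey
  calc poch μ n * poch (1/2) n * poch (1 - μ) n / (poch 1 n * poch 1 n * (n.factorial : ℝ))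
      = poch μ n * poch (1/2) n * poch (1 - μ) n / ((n.factorial : ℝ)) ^ 3 := by
        rw [poch_one_eq]; ring_nf
    _ = ∑ k ∈ Finset.range (n + 1), cc (μ / 2) ((1 - μ) / 2) k * cc (μ / 2) ((1 - μ) / 2) (n - k) :=
        hkey.symm
    _ = _ := by
        apply Finset.sum_congr rfl
        intro k _
        simp only [cc, poch_one_eq]
        ring
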